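/- Under the setup of the univariate objective G(r) = Σ_k [α·log(v_k·r + α) − η_k²·r/(v_k·r + α)], if α ≥ max_k (η_k²/v_k) then G is monotone nondecreasing on [0, ∞), so r = 0 is a global minimizer of G on [0, ∞). -/

import Mathlib

/-!
Substituting `s = v r + α` turns each summand into `α log s + (η² α / v) / s` up to a constant.
The derivative `(α s - η² α / v) / s²` of this is nonnegative for `s ≥ η² / v`, a range that
contains `[α, ∞)` when `α ≥ η² / v`, so every summand, hence `G`, is nondecreasing in `r ≥ 0`.
-/

open Real Set

theorem monotoneOn_mul_log_add_div {α β s₀ : ℝ} (hα : 0 ≤ α) (hs₀ : 0 < s₀)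
    (hβ : β ≤ α * s₀) : MonotoneOn (fun s => α * log s + β / s) (Ici s₀) := by
  intro a ha b hb hab
  have ha₀ : 0 < a := hs₀.trans_le ha
  have hb₀ : 0 < b := ha₀.trans_le hab
  have hlog : 1 - a / b ≤ log b - log a := by
    simpa [log_div hb₀.ne' ha₀.ne'] using one_sub_inv_le_log_of_pos (div_pos hb₀ ha₀)
  have hβa : β ≤ α * a := hβ.trans (mul_le_mul_of_nonneg_left ha hα)
  calc α * log a + β / a
      = α * log a + α * (1 - a / b) + (b - a) * (β - α * a) / (a * b) + β / b := by
        field_simp; ring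
    _ ≤ α * log a + α * (log b - log a) + 0 + β / b := by
        gcongr
        exact div_nonpos_of_nonpos_of_nonneg
          (mul_nonpos_of_nonneg_of_nonpos (by linarith) (by linarith)) (by positivity)
    _ = α * log b + β / b := by ring

theorem mul_log_sub_div_eq {α v c r : ℝ} (hv : v ≠ 0) (hs : v * r + α ≠ 0) :
    α * log (v * r + α) - c * r / (v * r + α)
      = α * log (v * r + α) + c * α / v / (v * r + α) - c / v := by
  field_simp
  ring

theorem monotoneOn_mul_log_sub_div {α v c : ℝ} (hα : 0 < α) (hv : 0 < v) (hc : c / v ≤ α) :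
    MonotoneOn (fun r => α * log (v * r + α) - c * r / (v * r + α)) (Ici 0) := by
  intro r₁ hr₁ r₂ hr₂ hr
  have hs : ∀ r ∈ Ici (0 : ℝ), α ≤ v * r + α := fun r hr =>
    le_add_of_nonneg_left (mul_nonneg hv.le hr)
  have hlog := monotoneOn_mul_log_add_div (β := c * α / v) hα.le hα
    (by rw [mul_div_right_comm]; exact mul_le_mul_of_nonneg_right hc hα.le)
    (hs r₁ hr₁) (hs r₂ hr₂) (by gcongr)
  simp only [mul_log_sub_div_eq hv.ne' (hα.trans_le (hs _ hr₁)).ne',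
    mul_log_sub_div_eq hv.ne' (hα.trans_le (hs _ hr₂)).ne']
  linarith

theorem stmt_5_general (d : ℕ) (α : ℝ) (hα : 0 < α)
    (v η : Fin d → ℝ) (hv : ∀ k, 0 < v k) (h : ∀ k, (η k) ^ 2 / v k ≤ α) :
    MonotoneOn (fun r : ℝ =>
        ∑ k, (α * Real.log (v k * r + α) - (η k) ^ 2 * r / (v k * r + α)))
      (Set.Ici 0) ∧
    IsMinOn (fun r : ℝ =>
        ∑ k, (α * Real.log (v k * r + α) - (η k) ^ 2 * r / (v k * r + α)))
      (Set.Ici 0) 0 := by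
  have hmono : MonotoneOn (fun r : ℝ =>
      ∑ k, (α * Real.log (v k * r + α) - (η k) ^ 2 * r / (v k * r + α))) (Ici 0) :=
    fun _ hr₁ _ hr₂ hr => Finset.sum_le_sum fun k _ =>
      monotoneOn_mul_log_sub_div hα (hv k) (h k) hr₁ hr₂ hr
  exact ⟨hmono, fun _ hr => hmono self_mem_Ici hr hr⟩

/-- If `α ≥ η_k²/v_k` for every `k`, then
`G(r) = Σ_k [α·log(v_k·r + α) − η_k²·r/(v_k·r + α)]` is monotone nondecreasing
on `[0, ∞)`, so `r = 0` is a global minimizer of `G` on `[0, ∞)`. -/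
theorem stmt_5 (d : ℕ) (hd : 0 < d) (α : ℝ) (hα : 0 < α)
    (v η : Fin d → ℝ) (hv : ∀ k, 0 < v k) (h : ∀ k, (η k) ^ 2 / v k ≤ α) :
    MonotoneOn (fun r : ℝ =>
        ∑ k, (α * Real.log (v k * r + α) - (η k) ^ 2 * r / (v k * r + α)))
      (Set.Ici 0) ∧
    IsMinOn (fun r : ℝ =>
        ∑ k, (α * Real.log (v k * r + α) - (η k) ^ 2 * r / (v k * r + α)))
      (Set.Ici 0) 0 :=
  stmt_5_general d α hα v η hv h
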